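/- Let M be a maximal independent set of the Kneser graph on chambers of PG(3,q). Any two π-lines of M meet; consequently the set X of all π-lines together with all lines of M-weight (q+1)^2 consists of pairwise intersecting lines, there is a point or plane incident with all lines of X, and |X| ≤ q^2+q+1. -/

import Mathlib

open Submodule

/-- A chamber of `PG(3,q)`: a mutually incident point-line-plane triple,
where points, lines and planes are the 1-, 2- and 3-dimensional subspaces
of a 4-dimensional vector space over `F = GF(q)`. -/
structure Chamber (F : Type) [Field F] where
  pt : Submodule F (Fin 4 → F)
  line : Submodule F (Fin 4 → F)
  plane : Submodule F (Fin 4 → F)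
  pt_rank : Module.finrank F pt = 1
  line_rank : Module.finrank F line = 2
  plane_rank : Module.finrank F plane = 3
  pt_le_line : pt ≤ line
  line_le_plane : line ≤ plane

/-- Two chambers are opposite if each point lies outside the other's plane
and the two lines are skew (intersect trivially). -/
def Chamber.Opp {F : Type} [Field F] (c d : Chamber F) : Prop :=
  ¬ c.pt ≤ d.plane ∧ ¬ d.pt ≤ c.plane ∧ c.line ⊓ d.line = ⊥

/-- An independent set of the Kneser graph on chambers: pairwise non-opposite chambers. -/
def IsIndep {F : Type} [Field F] (M : Set (Chamber F)) : Prop :=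
  ∀ c ∈ M, ∀ d ∈ M, ¬ c.Opp d

/-- A maximal independent set of the Kneser graph on chambers. -/
def IsMaxIndep {F : Type} [Field F] (M : Set (Chamber F)) : Prop :=
  IsIndep M ∧ ∀ c : Chamber F, (∀ d ∈ M, ¬ c.Opp d) → c ∈ M

/-- The `M`-weight of a line `l`: the number of chambers of `M` whose line is `l`. -/
noncomputable def wLine {F : Type} [Field F] (M : Set (Chamber F))
    (l : Submodule F (Fin 4 → F)) : ℕ :=
  {c ∈ M | c.line = l}.ncard

/-- The `M`-weight of an incident line-plane pair. -/
noncomputable def wPair {F : Type} [Field F] (M : Set (Chamber F))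
    (l π : Submodule F (Fin 4 → F)) : ℕ :=
  {c ∈ M | c.line = l ∧ c.plane = π}.ncard

/-- The `M`-weight of an incident point-line pair. -/
noncomputable def wPt {F : Type} [Field F] (M : Set (Chamber F))
    (P l : Submodule F (Fin 4 → F)) : ℕ :=
  {c ∈ M | c.pt = P ∧ c.line = l}.ncard

/-- A `π`-line of `M`: a line of weight `≠ (q+1)^2` lying in a plane `π` such that
the pair `(l, π)` has weight `q+1`. -/
def IsPiLine {F : Type} [Field F] [Fintype F] (M : Set (Chamber F))
    (l : Submodule F (Fin 4 → F)) : Prop :=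
  Module.finrank F l = 2 ∧ wLine M l ≠ (Fintype.card F + 1)^2 ∧
    ∃ π : Submodule F (Fin 4 → F), Module.finrank F π = 3 ∧ l ≤ π ∧ wPair M l π = Fintype.card F + 1

/-- A `P`-line of `M`: a line of weight `≠ (q+1)^2` through a point `P` such that
the pair `(P, l)` has weight `q+1`. -/
def IsPLine {F : Type} [Field F] [Fintype F] (M : Set (Chamber F))
    (l : Submodule F (Fin 4 → F)) : Prop :=
  Module.finrank F l = 2 ∧ wLine M l ≠ (Fintype.card F + 1)^2 ∧
    ∃ P : Submodule F (Fin 4 → F), Module.finrank F P = 1 ∧ P ≤ l ∧ wPt M P l = Fintype.card F + 1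

/-!
The weights force whole panels into `M`: a panel `{l, π}` has only `q + 1` chambers and a line
only `(q + 1)^2`, so a `π`-line `l` has its panel `{l, π}` in `M`, and a line of weight
`(q + 1)^2` has every panel through it in `M`. Two skew lines with panels in `M` are impossible,
since choosing on each line a point off the other panel's plane yields two opposite chambers.
Hence the lines of `X` pairwise meet, so they all pass through a point or lie in a plane; and a
point lies on, a plane contains, only `q^2 + q + 1` lines.
-/

open Module

section Correspondences

variable {K V : Type*} [Field K] [AddCommGroup V] [Module K V]

theorem ncard_setOf_finrank_eq_and_le (l : Submodule K V) (k : ℕ) :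
    {P : Submodule K V | finrank K P = k ∧ P ≤ l}.ncard
      = {P : Submodule K l | finrank K P = k}.ncard := by
  symm
  refine Set.ncard_congr (fun P _ => P.map l.subtype) ?_ ?_ ?_
  · intro P hP
    exact ⟨(finrank_map_subtype_eq l P).trans hP, map_subtype_le l P⟩
  · intro P Q _ _ h
    exact map_injective_of_injective l.injective_subtype h
  · rintro P ⟨hPk, hPl⟩
    have hP : (P.comap l.subtype).map l.subtype = P := by
      rw [map_comap_subtype, inf_eq_right.mpr hPl]
    refine ⟨P.comap l.subtype, ?_, hP⟩
    rwa [← hP, finrank_map_subtype_eq] at hPk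

variable [FiniteDimensional K V]

theorem finrank_map_mkQ_add_finrank {p W : Submodule K V} (h : p ≤ W) :
    finrank K (W.map p.mkQ) + finrank K p = finrank K W := by
  have hrn := LinearMap.finrank_range_add_finrank_ker (p.mkQ.domRestrict W)
  rw [LinearMap.range_domRestrict, LinearMap.ker_domRestrict, ker_mkQ] at hrn
  rwa [(comapSubtypeEquivOfLe h).finrank_eq] at hrn

theorem ncard_setOf_finrank_eq_and_ge (p : Submodule K V) {k m : ℕ} (hm : finrank K p + k = m) :
    {W : Submodule K V | finrank K W = m ∧ p ≤ W}.ncard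
      = {S : Submodule K (V ⧸ p) | finrank K S = k}.ncard := by
  refine Set.ncard_congr (fun W _ => W.map p.mkQ) ?_ ?_ ?_
  · rintro W ⟨hW, hpW⟩
    have := finrank_map_mkQ_add_finrank hpW
    show finrank K (W.map p.mkQ) = k
    omega
  · rintro W W' ⟨-, hpW⟩ ⟨-, hpW'⟩ h
    simpa only [comap_map_mkQ, sup_eq_right.mpr hpW, sup_eq_right.mpr hpW'] using
      congrArg (comap p.mkQ) h
  · intro S hS
    have hdim := finrank_map_mkQ_add_finrank (le_comap_mkQ p S)
    rw [map_comap_eq_of_surjective p.mkQ_surjective, hS] at hdim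
    exact ⟨S.comap p.mkQ, ⟨by omega, le_comap_mkQ p S⟩,
      map_comap_eq_of_surjective p.mkQ_surjective S⟩

theorem ncard_setOf_finrank_eq_dual {k m : ℕ} (h : m + k = finrank K V) :
    {W : Submodule K V | finrank K W = m}.ncard
      = {S : Submodule K (Dual K V) | finrank K S = k}.ncard := by
  refine Set.ncard_congr (fun W _ => W.dualAnnihilator) ?_ ?_ ?_
  · intro W (hW : finrank K W = m)
    have := Subspace.finrank_add_finrank_dualAnnihilator_eq W
    show finrank K W.dualAnnihilator = k
    omega
  · intro W W' _ _ hWW'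
    exact Subspace.dualAnnihilator_inj.mp hWW'
  · intro S (hS : finrank K S = k)
    have hdim := Subspace.finrank_add_finrank_dualAnnihilator_eq S
    rw [Subspace.dual_finrank_eq, ← Subspace.finrank_dualCoannihilator_eq] at hdim
    exact ⟨S.dualCoannihilator, show finrank K S.dualCoannihilator = m by omega,
      Subspace.dualCoannihilator_dualAnnihilator_eq⟩

end Correspondences

section Counting

variable {F V : Type*} [Field F] [Fintype F] [AddCommGroup V] [Module F V]

theorem ncard_setOf_finrank_eq_one {n : ℕ} (h : finrank F V = n) :
    {P : Submodule F V | finrank F P = 1}.ncard = ∑ i ∈ Finset.range n, Fintype.card F ^ i := by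
  rw [← Nat.card_coe_set_eq, ← Nat.card_eq_fintype_card,
    ← Projectivization.card_of_finrank F V h]
  exact Nat.card_congr (Projectivization.equivSubmodule F V).symm

theorem ncard_points_on_line {l : Submodule F V} (hl : finrank F l = 2) :
    {P : Submodule F V | finrank F P = 1 ∧ P ≤ l}.ncard = Fintype.card F + 1 := by
  rw [ncard_setOf_finrank_eq_and_le, ncard_setOf_finrank_eq_one hl]
  simp [Finset.sum_range_succ, add_comm]

variable [FiniteDimensional F V]

theorem ncard_planes_through_line (hV : finrank F V = 4) {l : Submodule F V}
    (hl : finrank F l = 2) :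
    {π : Submodule F V | finrank F π = 3 ∧ l ≤ π}.ncard = Fintype.card F + 1 := by
  have hquot := finrank_quotient_add_finrank l
  rw [ncard_setOf_finrank_eq_and_ge l (k := 1) (by omega),
    ncard_setOf_finrank_eq_one (n := 2) (by omega)]
  simp [Finset.sum_range_succ, add_comm]

theorem ncard_lines_through_point (hV : finrank F V = 4) {P : Submodule F V}
    (hP : finrank F P = 1) :
    {l : Submodule F V | finrank F l = 2 ∧ P ≤ l}.ncard
      = Fintype.card F ^ 2 + Fintype.card F + 1 := by
  have hquot := finrank_quotient_add_finrank P
  rw [ncard_setOf_finrank_eq_and_ge P (k := 1) (by omega),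
    ncard_setOf_finrank_eq_one (n := 3) (by omega)]
  simp [Finset.sum_range_succ]
  ring

theorem ncard_lines_in_plane {π : Submodule F V} (hπ : finrank F π = 3) :
    {l : Submodule F V | finrank F l = 2 ∧ l ≤ π}.ncard
      = Fintype.card F ^ 2 + Fintype.card F + 1 := by
  rw [ncard_setOf_finrank_eq_and_le, ncard_setOf_finrank_eq_dual (k := 1) (by omega),
    ncard_setOf_finrank_eq_one (Subspace.dual_finrank_eq.trans hπ)]
  simp [Finset.sum_range_succ]
  ring

end Counting

section Incidence

variable {K V : Type*} [Field K] [AddCommGroup V] [Module K V]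

theorem exists_finrank_eq_one_le_not_le {l s : Submodule K V} (h : ¬ l ≤ s) :
    ∃ P : Submodule K V, finrank K P = 1 ∧ P ≤ l ∧ ¬ P ≤ s := by
  obtain ⟨v, hvl, hvs⟩ := SetLike.not_le_iff_exists.mp h
  have hv : v ≠ 0 := fun h0 => hvs (h0 ▸ s.zero_mem)
  exact ⟨K ∙ v, finrank_span_singleton hv, (span_singleton_le_iff_mem v l).2 hvl,
    fun hle => hvs (hle (mem_span_singleton_self v))⟩

theorem exists_finrank_eq_one_le {l : Submodule K V} (h : l ≠ ⊥) :
    ∃ P : Submodule K V, finrank K P = 1 ∧ P ≤ l := by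
  obtain ⟨P, hP, hPl, -⟩ := exists_finrank_eq_one_le_not_le (le_bot_iff.not.mpr h)
  exact ⟨P, hP, hPl⟩

theorem exists_finrank_eq_one_forall_le_of_subsingleton [Nontrivial V]
    {X : Set (Submodule K V)} (hX : ∀ l ∈ X, l ≠ ⊥) (hs : X.Subsingleton) :
    ∃ P : Submodule K V, finrank K P = 1 ∧ ∀ l ∈ X, P ≤ l := by
  rcases hs.eq_empty_or_singleton with rfl | ⟨l, rfl⟩
  · obtain ⟨P, hP, -⟩ := exists_finrank_eq_one_le (top_ne_bot : (⊤ : Submodule K V) ≠ ⊥)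
    exact ⟨P, hP, by simp⟩
  · obtain ⟨P, hP, hPl⟩ := exists_finrank_eq_one_le (hX l rfl)
    exact ⟨P, hP, by simpa using hPl⟩

variable [FiniteDimensional K V]

theorem inf_eq_bot_of_finrank_eq_one {P S : Submodule K V} (hP : finrank K P = 1)
    (h : ¬ P ≤ S) : P ⊓ S = ⊥ := by
  have := finrank_lt_finrank_of_lt (inf_lt_left.mpr h)
  exact finrank_eq_zero.mp (by omega)

theorem not_le_of_inf_eq_bot {l₁ l₂ π : Submodule K V} (h : l₁ ⊓ l₂ = ⊥)
    (hπ : finrank K π < finrank K l₁ + finrank K l₂) (hl₂ : l₂ ≤ π) : ¬ l₁ ≤ π := by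
  intro hl₁
  have := finrank_sup_add_finrank_inf_eq l₁ l₂
  have := finrank_mono (sup_le hl₁ hl₂)
  rw [h, finrank_bot] at *
  omega

theorem le_of_finrank_eq_two {l π A B : Submodule K V} (hl : finrank K l = 2)
    (hA : A ≤ l ⊓ π) (hB : B ≤ l ⊓ π) (hA₀ : A ≠ ⊥) (hB₀ : B ≠ ⊥) (hAB : A ⊓ B = ⊥) :
    l ≤ π := by
  have hdim := finrank_sup_add_finrank_inf_eq A B
  rw [hAB, finrank_bot] at hdim
  have := one_le_finrank_iff.mpr hA₀
  have := one_le_finrank_iff.mpr hB₀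
  have hAB_l : A ⊔ B = l :=
    eq_of_le_of_finrank_le (sup_le (hA.trans inf_le_left) (hB.trans inf_le_left)) (by omega)
  exact hAB_l ▸ sup_le (hA.trans inf_le_right) (hB.trans inf_le_right)

theorem finrank_inf_eq_one {l₁ l₂ : Submodule K V} (h₁ : finrank K l₁ = 2)
    (h₂ : finrank K l₂ = 2) (hne : l₁ ≠ l₂) (hmeet : l₁ ⊓ l₂ ≠ ⊥) :
    finrank K ↥(l₁ ⊓ l₂) = 1 := by
  have hlt : l₁ ⊓ l₂ < l₁ := inf_lt_left.mpr fun hle =>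
    hne (eq_of_le_of_finrank_le hle (by omega))
  have := finrank_lt_finrank_of_lt hlt
  have := one_le_finrank_iff.mpr hmeet
  omega

theorem le_sup_of_inf_ne_bot_of_not_le {l l₁ l₂ : Submodule K V} (hl : finrank K l = 2)
    (hP : finrank K ↥(l₁ ⊓ l₂) = 1) (h₁ : l ⊓ l₁ ≠ ⊥) (h₂ : l ⊓ l₂ ≠ ⊥) (hPl : ¬ l₁ ⊓ l₂ ≤ l) :
    l ≤ l₁ ⊔ l₂ := by
  apply le_of_finrank_eq_two (A := l ⊓ l₁) (B := l ⊓ l₂) hl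
  · exact le_inf inf_le_left (inf_le_right.trans le_sup_left)
  · exact le_inf inf_le_left (inf_le_right.trans le_sup_right)
  · exact h₁
  · exact h₂
  · rw [eq_bot_iff, ← inf_eq_bot_of_finrank_eq_one hP hPl]
    exact le_inf (inf_le_inf inf_le_right inf_le_right) (inf_le_left.trans inf_le_left)

theorem exists_point_or_plane_of_pairwise_inf_ne_bot [Nontrivial V]
    {X : Set (Submodule K V)} (hX : ∀ l ∈ X, finrank K l = 2)
    (hmeet : ∀ l₁ ∈ X, ∀ l₂ ∈ X, l₁ ⊓ l₂ ≠ ⊥) :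
    (∃ P : Submodule K V, finrank K P = 1 ∧ ∀ l ∈ X, P ≤ l) ∨
      (∃ π : Submodule K V, finrank K π = 3 ∧ ∀ l ∈ X, l ≤ π) := by
  rw [or_iff_not_imp_left]
  intro hP
  obtain ⟨l₁, h₁, l₂, h₂, hne⟩ : X.Nontrivial := Set.not_subsingleton_iff.mp fun hs =>
    hP <| exists_finrank_eq_one_forall_le_of_subsingleton
      (fun l hl => one_le_finrank_iff.mp (one_le_two.trans (hX l hl).ge)) hs
  push Not at hP
  set P := l₁ ⊓ l₂
  have hP₁ : finrank K P = 1 := finrank_inf_eq_one (hX l₁ h₁) (hX l₂ h₂) hne (hmeet l₁ h₁ l₂ h₂)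
  obtain ⟨l₃, h₃, hPl₃⟩ := hP P hP₁
  have h_avoid : ∀ l ∈ X, ¬ P ≤ l → l ≤ l₁ ⊔ l₂ := fun l hl hPl =>
    le_sup_of_inf_ne_bot_of_not_le (hX l hl) hP₁ (hmeet l hl l₁ h₁) (hmeet l hl l₂ h₂) hPl
  refine ⟨l₁ ⊔ l₂, ?_, fun l hl => ?_⟩
  · have := finrank_sup_add_finrank_inf_eq l₁ l₂
    rw [hX l₁ h₁, hX l₂ h₂, hP₁] at this
    omega
  by_cases hPl : P ≤ l
  · apply le_of_finrank_eq_two (A := P) (B := l ⊓ l₃) (hX l hl)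
    · exact le_inf hPl (inf_le_left.trans le_sup_left)
    · exact le_inf inf_le_left (inf_le_right.trans (h_avoid l₃ h₃ hPl₃))
    · exact one_le_finrank_iff.mp hP₁.ge
    · exact hmeet l hl l₃ h₃
    · rw [eq_bot_iff, ← inf_eq_bot_of_finrank_eq_one hP₁ hPl₃]
      exact inf_le_inf_left P inf_le_right
  · exact h_avoid l hl hPl

end Incidence

theorem mem_of_ncard_le_ncard_sep {α : Type*} {M : Set α} {p : α → Prop}
    (hfin : {a | p a}.Finite) (h : {a | p a}.ncard ≤ {a ∈ M | p a}.ncard) {a : α} (ha : p a) :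
    a ∈ M := by
  have heq := Set.eq_of_subset_of_ncard_le (fun _ hb => hb.2) h hfin
  exact (heq.symm ▸ ha : a ∈ {a ∈ M | p a}).1

namespace Chamber

variable {F : Type} [Field F]

theorem ext {c d : Chamber F} (hpt : c.pt = d.pt) (hline : c.line = d.line)
    (hplane : c.plane = d.plane) : c = d := by
  cases c
  cases d
  subst hpt hline hplane
  rfl

variable [Fintype F]

instance : Finite (Chamber F) :=
  Finite.of_injective (fun c => (c.pt, c.line, c.plane)) fun _ _ h => by
    simp only [Prod.mk.injEq] at h
    exact ext h.1 h.2.1 h.2.2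

theorem ncard_setOf_line_eq_le {l : Submodule F (Fin 4 → F)} (hl : finrank F l = 2) :
    {c : Chamber F | c.line = l}.ncard ≤ (Fintype.card F + 1) ^ 2 := by
  calc {c : Chamber F | c.line = l}.ncard
      ≤ ({P : Submodule F (Fin 4 → F) | finrank F P = 1 ∧ P ≤ l} ×ˢ
          {π : Submodule F (Fin 4 → F) | finrank F π = 3 ∧ l ≤ π}).ncard := by
        refine Set.ncard_le_ncard_of_injOn (fun c => (c.pt, c.plane)) ?_ ?_
        · rintro c rfl
          exact ⟨⟨c.pt_rank, c.pt_le_line⟩, ⟨c.plane_rank, c.line_le_plane⟩⟩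
        · intro c hc d hd h
          exact ext (Prod.ext_iff.mp h).1 (hc.trans hd.symm) (Prod.ext_iff.mp h).2
    _ = (Fintype.card F + 1) ^ 2 := by
        rw [Set.ncard_prod, ncard_points_on_line hl,
          ncard_planes_through_line (finrank_fin_fun F) hl, sq]

theorem ncard_setOf_line_plane_eq_le {l π : Submodule F (Fin 4 → F)} (hl : finrank F l = 2) :
    {c : Chamber F | c.line = l ∧ c.plane = π}.ncard ≤ Fintype.card F + 1 := by
  calc {c : Chamber F | c.line = l ∧ c.plane = π}.ncard
      ≤ {P : Submodule F (Fin 4 → F) | finrank F P = 1 ∧ P ≤ l}.ncard := by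
        refine Set.ncard_le_ncard_of_injOn Chamber.pt ?_ ?_
        · rintro c ⟨rfl, -⟩
          exact ⟨c.pt_rank, c.pt_le_line⟩
        · intro c hc d hd h
          exact ext h (hc.1.trans hd.1.symm) (hc.2.trans hd.2.symm)
    _ = Fintype.card F + 1 := ncard_points_on_line hl

end Chamber

variable {F : Type} [Field F]

/-- `M` contains the panel of the flag `{l, π}`, in the sense of buildings. -/
def ContainsPanel (M : Set (Chamber F)) (l π : Submodule F (Fin 4 → F)) : Prop :=
  ∀ c : Chamber F, c.line = l → c.plane = π → c ∈ M

theorem inf_ne_bot_of_containsPanel {M : Set (Chamber F)} (hM : IsIndep M)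
    {l₁ l₂ π₁ π₂ : Submodule F (Fin 4 → F)} (hl₁ : finrank F l₁ = 2) (hl₂ : finrank F l₂ = 2)
    (hπ₁ : finrank F π₁ = 3) (hπ₂ : finrank F π₂ = 3) (hlπ₁ : l₁ ≤ π₁) (hlπ₂ : l₂ ≤ π₂)
    (h₁ : ContainsPanel M l₁ π₁) (h₂ : ContainsPanel M l₂ π₂) : l₁ ⊓ l₂ ≠ ⊥ := by
  intro hskew
  obtain ⟨P₁, hP₁, hPl₁, hPπ₂⟩ := exists_finrank_eq_one_le_not_le <|
    not_le_of_inf_eq_bot hskew (by omega) hlπ₂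
  obtain ⟨P₂, hP₂, hPl₂, hPπ₁⟩ := exists_finrank_eq_one_le_not_le <|
    not_le_of_inf_eq_bot (inf_comm l₁ l₂ ▸ hskew) (by omega) hlπ₁
  let c₁ : Chamber F := ⟨P₁, l₁, π₁, hP₁, hl₁, hπ₁, hPl₁, hlπ₁⟩
  let c₂ : Chamber F := ⟨P₂, l₂, π₂, hP₂, hl₂, hπ₂, hPl₂, hlπ₂⟩
  exact hM c₁ (h₁ c₁ rfl rfl) c₂ (h₂ c₂ rfl rfl) ⟨hPπ₂, hPπ₁, hskew⟩

variable [Fintype F]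

theorem exists_containsPanel_of_isPiLine {M : Set (Chamber F)} {l : Submodule F (Fin 4 → F)}
    (h : IsPiLine M l) :
    ∃ π : Submodule F (Fin 4 → F), finrank F π = 3 ∧ l ≤ π ∧ ContainsPanel M l π := by
  obtain ⟨hl, -, π, hπ, hlπ, hw⟩ := h
  refine ⟨π, hπ, hlπ, fun c hcl hcπ => ?_⟩
  refine mem_of_ncard_le_ncard_sep (p := fun c : Chamber F => c.line = l ∧ c.plane = π)
    (Set.toFinite _) ?_ ⟨hcl, hcπ⟩
  exact (Chamber.ncard_setOf_line_plane_eq_le hl).trans hw.ge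

theorem exists_containsPanel_of_wLine_eq {M : Set (Chamber F)} {l : Submodule F (Fin 4 → F)}
    (hl : finrank F l = 2) (hw : wLine M l = (Fintype.card F + 1) ^ 2) :
    ∃ π : Submodule F (Fin 4 → F), finrank F π = 3 ∧ l ≤ π ∧ ContainsPanel M l π := by
  obtain ⟨π, hπ, hlπ⟩ : {π : Submodule F (Fin 4 → F) | finrank F π = 3 ∧ l ≤ π}.Nonempty :=
    Set.nonempty_of_ncard_ne_zero (by rw [ncard_planes_through_line (finrank_fin_fun F) hl]; omega)
  refine ⟨π, hπ, hlπ, fun c hcl _ => ?_⟩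
  refine mem_of_ncard_le_ncard_sep (p := fun c : Chamber F => c.line = l)
    (Set.toFinite _) ?_ hcl
  exact (Chamber.ncard_setOf_line_eq_le hl).trans hw.ge

/-- Any two `π`-lines of `M` meet; the set `X` of `π`-lines together with lines of
weight `(q+1)^2` consists of pairwise intersecting lines, there is a point or plane
incident with all of them, and `|X| ≤ q^2+q+1`. -/
theorem pi_lines_meet {F : Type} [Field F] [Fintype F] {q : ℕ}
    (hq : Fintype.card F = q)
    (M : Set (Chamber F)) (hM : IsMaxIndep M) :
    letI X := {l : Submodule F (Fin 4 → F) |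
      IsPiLine M l ∨ (Module.finrank F l = 2 ∧ wLine M l = (q + 1)^2)}
    (∀ l₁ l₂ : Submodule F (Fin 4 → F), IsPiLine M l₁ → IsPiLine M l₂ → l₁ ⊓ l₂ ≠ ⊥) ∧
    (∀ l₁ ∈ X, ∀ l₂ ∈ X, l₁ ⊓ l₂ ≠ ⊥) ∧
    (∃ x : Submodule F (Fin 4 → F),
      (Module.finrank F x = 1 ∨ Module.finrank F x = 3) ∧
      ∀ l ∈ X, x ≤ l ∨ l ≤ x) ∧
    X.ncard ≤ q^2 + q + 1 := by
  subst hq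
  set X : Set (Submodule F (Fin 4 → F)) := {l | IsPiLine M l ∨
    (finrank F l = 2 ∧ wLine M l = (Fintype.card F + 1) ^ 2)}
  have hX : ∀ l ∈ X, finrank F l = 2 ∧
      ∃ π : Submodule F (Fin 4 → F), finrank F π = 3 ∧ l ≤ π ∧ ContainsPanel M l π := by
    rintro l (hl | ⟨hl, hw⟩)
    · exact ⟨hl.1, exists_containsPanel_of_isPiLine hl⟩
    · exact ⟨hl, exists_containsPanel_of_wLine_eq hl hw⟩
  have hmeet : ∀ l₁ ∈ X, ∀ l₂ ∈ X, l₁ ⊓ l₂ ≠ ⊥ := by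
    intro l₁ h₁ l₂ h₂
    obtain ⟨hl₁, π₁, hπ₁, hlπ₁, hM₁⟩ := hX l₁ h₁
    obtain ⟨hl₂, π₂, hπ₂, hlπ₂, hM₂⟩ := hX l₂ h₂
    exact inf_ne_bot_of_containsPanel hM.1 hl₁ hl₂ hπ₁ hπ₂ hlπ₁ hlπ₂ hM₁ hM₂
  refine ⟨fun l₁ l₂ h₁ h₂ => hmeet l₁ (Or.inl h₁) l₂ (Or.inl h₂), hmeet, ?_⟩
  rcases exists_point_or_plane_of_pairwise_inf_ne_bot (fun l hl => (hX l hl).1) hmeet with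
    ⟨P, hP, hPX⟩ | ⟨π, hπ, hπX⟩
  · refine ⟨⟨P, Or.inl hP, fun l hl => Or.inl (hPX l hl)⟩, ?_⟩
    calc X.ncard ≤ {l : Submodule F (Fin 4 → F) | finrank F l = 2 ∧ P ≤ l}.ncard :=
          Set.ncard_le_ncard fun l hl => ⟨(hX l hl).1, hPX l hl⟩
      _ = _ := ncard_lines_through_point (finrank_fin_fun F) hP
  · refine ⟨⟨π, Or.inr hπ, fun l hl => Or.inr (hπX l hl)⟩, ?_⟩
    calc X.ncard ≤ {l : Submodule F (Fin 4 → F) | finrank F l = 2 ∧ l ≤ π}.ncard :=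
          Set.ncard_le_ncard fun l hl => ⟨(hX l hl).1, hπX l hl⟩
      _ = _ := ncard_lines_in_plane hπ
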